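/- Let n₀ ≥ 3 be an odd integer. If the logarithmic Sobolev inequality H_{n₀}[λ] ≤ 2⟨λ, Ψ(n₀)λ⟩ holds for all λ ∈ [0,∞)^{n₀}, where Ψ(n₀) = (1/n₀)·F_{n₀}·diag(ψ_{n₀}(0),…,ψ_{n₀}(n₀−1))·F_{n₀}^{−1}, then for every integer m ≥ 1 the inequality H_{n₀·2^m}[λ] ≤ 2⟨λ, Ψ(n₀·2^m)λ⟩ holds for all λ ∈ [0,∞)^{n₀·2^m}, where Ψ(n₀·2^m) is defined analogously from the word-length ψ_{n₀·2^m}. -/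

import Mathlib

/-!
Split `λ ∈ [0,∞)^{2N}` into its even part `a` and odd part `b`. The entropy splits exactly as
`(2N)² H_{2N}[λ] = 2N² (H_N[a] + H_N[b]) + 2N E(‖a‖², ‖b‖²)` with
`E(A, B) = A log A + B log B - (A + B) log ((A + B) / 2)`, and Gross's two-point inequality
`E(A, B) ≤ (√A - √B)²`, Parseval and the triangle inequality in `ℓ²` bound the last term by
`2 ∑_k (|â_k| - |b̂_k|)²`. On the Fourier side `λ̂_k = â_k + ω^k b̂_k`, `λ̂_{k+N} = â_k - ω^k b̂_k`
with `ω = e^{πi/N}`, and `ψ_{2N}(k) = k`, `ψ_{2N}(k + N) = N - k` for `k < N`, so the energies can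
be compared frequency by frequency. This comparison loses at the middle frequency `k = N/2` of an
even `N` and gains `|λ̂_N|²` at `k = 0`. The induction therefore carries the stronger inequality
with the Nyquist term `|λ̂_{m/2}|²` (`m` even) added to the entropy side; for odd `n₀` that term
is absent and the stronger inequality is the hypothesis.
-/

open scoped BigOperators ComplexOrder

/-- The `m × m` DFT matrix with entries `e^{2πijk/m}`. -/
noncomputable def dftMatrix (m : ℕ) : Matrix (Fin m) (Fin m) ℂ :=
  Matrix.of fun j k => Complex.exp (2 * Real.pi * Complex.I * (j.val : ℂ) * (k.val : ℂ) / m)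

/-- `Γ(m) = (1/m)·F_m·diag(γ(0),…,γ(m-1))·F_m⁻¹` for a weight `γ : ℕ → ℝ`. -/
noncomputable def GammaMat (m : ℕ) (γ : ℕ → ℝ) : Matrix (Fin m) (Fin m) ℂ :=
  (1 / m : ℂ) • (dftMatrix m * Matrix.diagonal (fun k : Fin m => (γ k.val : ℂ)) * (dftMatrix m)⁻¹)

/-- `⟨u, Mu⟩ = ∑_j conj(u_j) (Mu)_j` for a real vector `u`. -/
noncomputable def quadForm (m : ℕ) (M : Matrix (Fin m) (Fin m) ℂ) (u : Fin m → ℝ) : ℂ :=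
  ∑ j : Fin m, (starRingEnd ℂ) (u j : ℂ) * M.mulVec (fun i => (u i : ℂ)) j

/-- The interleaved vector `λ = (a_0, b_0, a_1, b_1, …, a_{n-1}, b_{n-1})`. -/
noncomputable def interleave (n : ℕ) (a b : Fin n → ℝ) : Fin (2 * n) → ℝ :=
  fun j =>
    if j.val % 2 = 0 then a ⟨j.val / 2, by have := j.isLt; omega⟩
    else b ⟨j.val / 2, by have := j.isLt; omega⟩

/-- Entropy functional `H_m[λ]`. -/
noncomputable def entH (m : ℕ) (l : Fin m → ℝ) : ℝ :=
  (1 / m : ℝ) * ∑ x : Fin m, l x ^ 2 * Real.log (l x ^ 2)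
    - ((∑ x : Fin m, l x ^ 2) / m) * Real.log ((∑ x : Fin m, l x ^ 2) / m)

/-- Word-length function on `ℤ_n`: `ψ_n(k) = min(k, n-k)`. -/
noncomputable def psiLen (n k : ℕ) : ℝ := min (k : ℝ) ((n - k : ℕ) : ℝ)

/-- `Ψ(m) = (1/m)·F_m·diag(ψ_m(0),…,ψ_m(m-1))·F_m⁻¹`. -/
noncomputable def PsiMat (m : ℕ) : Matrix (Fin m) (Fin m) ℂ :=
  GammaMat m (fun k => psiLen m k)

namespace CyclicLSI

open Finset Matrix Real

noncomputable def primRoot (m : ℕ) : ℂ := Complex.exp (2 * π * Complex.I / m)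

lemma norm_primRoot_pow (m k : ℕ) : ‖primRoot m ^ k‖ = 1 := by
  rw [norm_pow, primRoot, Complex.norm_exp]
  simp

lemma star_primRoot_pow_mul_self (m k : ℕ) : star (primRoot m ^ k) * primRoot m ^ k = 1 := by
  rw [Complex.star_def, Complex.conj_mul', norm_primRoot_pow]
  simp

lemma primRoot_pow_self (m : ℕ) : primRoot m ^ m = 1 := by
  rcases eq_or_ne m 0 with rfl | hm
  · exact pow_zero _
  · exact (Complex.isPrimitiveRoot_exp m hm).pow_eq_one

lemma primRoot_two_mul_sq {N : ℕ} (hN : N ≠ 0) : primRoot (2 * N) ^ 2 = primRoot N := by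
  rw [primRoot, primRoot, ← Complex.exp_nat_mul]
  congr 1
  push_cast
  field_simp

lemma primRoot_two_mul_pow_self {N : ℕ} (hN : N ≠ 0) : primRoot (2 * N) ^ N = -1 := by
  rw [primRoot, ← Complex.exp_nat_mul, ← Complex.exp_pi_mul_I]
  congr 1
  push_cast
  field_simp

lemma dftMatrix_apply (m : ℕ) (j k : Fin m) : dftMatrix m j k = primRoot m ^ (j.val * k.val) := by
  rw [dftMatrix, Matrix.of_apply, primRoot, ← Complex.exp_nat_mul]
  congr 1
  push_cast
  ring

lemma dftMatrix_mul_conjTranspose (m : ℕ) : dftMatrix m * (dftMatrix m)ᴴ = (m : ℂ) • 1 := by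
  ext j i
  set ρ := primRoot m ^ j.val * star (primRoot m ^ i.val)
  have hsum : (dftMatrix m * (dftMatrix m)ᴴ) j i = ∑ k ∈ range m, ρ ^ k := by
    rw [Matrix.mul_apply, ← Fin.sum_univ_eq_sum_range (fun k => ρ ^ k)]
    refine Finset.sum_congr rfl fun k _ => ?_
    rw [conjTranspose_apply, dftMatrix_apply, dftMatrix_apply, mul_pow, ← star_pow, ← pow_mul,
      ← pow_mul]
  rw [hsum, Matrix.smul_apply, Matrix.one_apply]
  split_ifs with hji
  · subst hji
    have hρ : ρ = 1 := (mul_comm _ _).trans (star_primRoot_pow_mul_self m j)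
    simp [hρ]
  · have hρm : ρ ^ m = 1 := by
      rw [mul_pow, ← star_pow, ← pow_mul, ← pow_mul, mul_comm j.val, mul_comm i.val, pow_mul,
        pow_mul, primRoot_pow_self]
      simp
    have hρ : ρ ≠ 1 := by
      intro h
      have hm : m ≠ 0 := by have := j.isLt; omega
      have : primRoot m ^ j.val = primRoot m ^ i.val := by
        calc primRoot m ^ j.val = ρ * primRoot m ^ i.val := by
              rw [mul_assoc, star_primRoot_pow_mul_self, mul_one]
          _ = _ := by rw [h, one_mul]
      exact hji (Fin.ext ((Complex.isPrimitiveRoot_exp m hm).pow_inj j.isLt i.isLt this))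
    rw [geom_sum_eq hρ, hρm]
    simp

lemma inv_dftMatrix {m : ℕ} (hm : m ≠ 0) : (dftMatrix m)⁻¹ = (m : ℂ)⁻¹ • (dftMatrix m)ᴴ := by
  refine Matrix.inv_eq_right_inv ?_
  rw [Matrix.mul_smul, dftMatrix_mul_conjTranspose, smul_smul,
    inv_mul_cancel₀ (Nat.cast_ne_zero.2 hm), one_smul]

-- Frequencies range over `ℕ` (the transform is `m`-periodic, `dft_add_self`), so that the
-- frequency `k + N` of a vector of length `2 * N` needs no reduction.
noncomputable def dft (m : ℕ) (l : Fin m → ℝ) (k : ℕ) : ℂ :=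
  ∑ j : Fin m, (l j : ℂ) * primRoot m ^ (j.val * k)

lemma dft_eq_vecMul (m : ℕ) (l : Fin m → ℝ) (k : Fin m) :
    dft m l k = ((fun j => (l j : ℂ)) ᵥ* dftMatrix m) k := by
  simp only [dft, vecMul, dotProduct, dftMatrix_apply]

lemma dft_add_self (m : ℕ) (l : Fin m → ℝ) (k : ℕ) : dft m l (k + m) = dft m l k := by
  refine Finset.sum_congr rfl fun j _ => ?_
  rw [mul_add, pow_add, mul_comm j.val m, pow_mul (primRoot m) m, primRoot_pow_self, one_pow,
    mul_one]

lemma quadForm_GammaMat {m : ℕ} (hm : m ≠ 0) (γ : ℕ → ℝ) (l : Fin m → ℝ) :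
    quadForm m (GammaMat m γ) l = ((∑ k ∈ range m, γ k * ‖dft m l k‖ ^ 2) / m ^ 2 : ℝ) := by
  set x : Fin m → ℂ := fun j => (l j : ℂ)
  set y := x ᵥ* dftMatrix m with hydef
  have hx : star x = x := funext fun j => Complex.conj_ofReal (l j)
  have hy : (dftMatrix m)ᴴ *ᵥ x = star y := by rw [star_vecMul, hx]
  have hquad : quadForm m (GammaMat m γ) l = star x ⬝ᵥ (GammaMat m γ *ᵥ x) := rfl
  have hterm : ∀ k : Fin m, y k * ((diagonal fun k : Fin m => (γ k : ℂ)) *ᵥ star y) k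
      = ((γ k * ‖dft m l k‖ ^ 2 : ℝ) : ℂ) := by
    intro k
    rw [mulVec_diagonal, Pi.star_apply, mul_left_comm, Complex.star_def, Complex.mul_conj', hydef,
      ← dft_eq_vecMul]
    push_cast
    rfl
  rw [hquad, GammaMat, inv_dftMatrix hm, Matrix.mul_smul, Matrix.smul_mulVec, Matrix.smul_mulVec,
    dotProduct_smul, dotProduct_smul, ← mulVec_mulVec, ← mulVec_mulVec, dotProduct_mulVec, hx, hy,
    dotProduct, Finset.sum_congr rfl fun k _ => hterm k,
    ← Fin.sum_univ_eq_sum_range (fun k => γ k * ‖dft m l k‖ ^ 2)]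
  simp only [smul_eq_mul]
  push_cast
  ring

lemma sum_norm_dft_sq {m : ℕ} (hm : m ≠ 0) (l : Fin m → ℝ) :
    ∑ k ∈ range m, ‖dft m l k‖ ^ 2 = m * ∑ j, l j ^ 2 := by
  have hΓ : GammaMat m (fun _ => 1) = (m : ℂ)⁻¹ • 1 := by
    rw [GammaMat, inv_dftMatrix hm]
    simp [dftMatrix_mul_conjTranspose, smul_smul, hm]
  have h := quadForm_GammaMat hm (fun _ => 1) l
  rw [hΓ] at h
  simp only [quadForm, Matrix.smul_mulVec, one_mulVec, Pi.smul_apply, smul_eq_mul, one_mul,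
    Complex.conj_ofReal] at h
  have h' : (∑ k ∈ range m, ‖dft m l k‖ ^ 2) / m ^ 2 = (m : ℝ)⁻¹ * ∑ j, l j ^ 2 := by
    apply Complex.ofReal_injective
    rw [← h]
    push_cast
    rw [Finset.mul_sum]
    exact Finset.sum_congr rfl fun j _ => by ring
  have hm' : (m : ℝ) ≠ 0 := Nat.cast_ne_zero.2 hm
  field_simp at h'
  linear_combination h'

lemma sq_sqrt_sub_sqrt_le_sum_sq_sub {ι : Type*} (s : Finset ι) (f g : ι → ℝ) :
    (√(∑ i ∈ s, f i ^ 2) - √(∑ i ∈ s, g i ^ 2)) ^ 2 ≤ ∑ i ∈ s, (f i - g i) ^ 2 := by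
  have hcs := Real.sum_mul_le_sqrt_mul_sqrt s f g
  have hexp : ∑ i ∈ s, (f i - g i) ^ 2
      = ∑ i ∈ s, f i ^ 2 + ∑ i ∈ s, g i ^ 2 - 2 * ∑ i ∈ s, f i * g i := by
    rw [mul_sum, ← sum_add_distrib, ← sum_sub_distrib]
    exact Finset.sum_congr rfl fun i _ => by ring
  rw [hexp, sub_sq, sq_sqrt (sum_nonneg fun i _ => sq_nonneg _),
    sq_sqrt (sum_nonneg fun i _ => sq_nonneg _)]
  linarith

lemma mul_sq_sqrt_sub_sqrt_le {N : ℕ} (hN : N ≠ 0) (a b : Fin N → ℝ) :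
    N * (√(∑ r, a r ^ 2) - √(∑ r, b r ^ 2)) ^ 2
      ≤ ∑ k ∈ range N, (‖dft N a k‖ - ‖dft N b k‖) ^ 2 := by
  have h := sq_sqrt_sub_sqrt_le_sum_sq_sub (range N) (‖dft N a ·‖) (‖dft N b ·‖)
  rw [sum_norm_dft_sq hN, sum_norm_dft_sq hN, sqrt_mul (Nat.cast_nonneg N),
    sqrt_mul (Nat.cast_nonneg N), ← mul_sub, mul_pow, sq_sqrt (Nat.cast_nonneg N)] at h
  exact h

noncomputable def energy (m : ℕ) (l : Fin m → ℝ) : ℝ :=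
  ∑ k ∈ range m, psiLen m k * ‖dft m l k‖ ^ 2

noncomputable def nyquistTerm (m : ℕ) (l : Fin m → ℝ) : ℝ :=
  if Even m then ‖dft m l (m / 2)‖ ^ 2 else 0

lemma nyquistTerm_nonneg (m : ℕ) (l : Fin m → ℝ) : 0 ≤ nyquistTerm m l := by
  unfold nyquistTerm
  split_ifs <;> positivity

lemma nyquistTerm_of_odd {m : ℕ} (hm : Odd m) (l : Fin m → ℝ) : nyquistTerm m l = 0 :=
  if_neg (Nat.not_even_iff_odd.2 hm)

lemma ofReal_entH_le_iff {m : ℕ} (hm : m ≠ 0) (l : Fin m → ℝ) :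
    ((entH m l : ℝ) : ℂ) ≤ 2 * quadForm m (PsiMat m) l ↔ (m : ℝ) ^ 2 * entH m l ≤ 2 * energy m l := by
  rw [PsiMat, quadForm_GammaMat hm, ← Complex.ofReal_ofNat, ← Complex.ofReal_mul,
    Complex.real_le_real, ← energy, mul_div_assoc', le_div_iff₀ (by positivity), mul_comm]

def LSIWithNyquist (m : ℕ) : Prop :=
  ∀ l : Fin m → ℝ, (∀ j, 0 ≤ l j) → (m : ℝ) ^ 2 * entH m l + nyquistTerm m l ≤ 2 * energy m l

lemma two_mul_log_le_sub_inv {y : ℝ} (hy : 1 ≤ y) : 2 * log y ≤ y - y⁻¹ := by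
  have h := self_le_sinh_iff.2 (log_nonneg hy)
  rw [sinh_eq, exp_neg, exp_log (by linarith)] at h
  linarith

lemma log_one_add_sub_log_one_sub_le {u : ℝ} (hu0 : 0 ≤ u) (hu1 : u < 1) :
    log (1 + u) - log (1 - u) ≤ 2 * u / √(1 - u ^ 2) := by
  have hr : 0 < 1 - u ^ 2 := by nlinarith
  set r := √(1 - u ^ 2) with hrdef
  have hr0 : 0 < r := sqrt_pos.2 hr
  have hr2 : r ^ 2 = 1 - u ^ 2 := sq_sqrt hr.le
  have hr1 : r ≤ 1 + u := by nlinarith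
  have hlog : log (1 + u) - log (1 - u) = 2 * log ((1 + u) / r) := by
    rw [log_div (by linarith) hr0.ne', hrdef, log_sqrt hr.le,
      show 1 - u ^ 2 = (1 - u) * (1 + u) by ring, log_mul (by linarith) (by linarith)]
    ring
  have hsub : (1 + u) / r - ((1 + u) / r)⁻¹ = 2 * u / r := by
    field_simp
    linear_combination -hr2
  rw [hlog, ← hsub]
  exact two_mul_log_le_sub_inv ((one_le_div hr0).2 hr1)

lemma mul_log_one_add_add_mul_log_one_sub_le {u : ℝ} (hu0 : 0 ≤ u) (hu1 : u ≤ 1) :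
    (1 + u) * log (1 + u) + (1 - u) * log (1 - u) ≤ 2 - 2 * √(1 - u ^ 2) := by
  let f : ℝ → ℝ := fun x =>
    2 - 2 * √(1 - x ^ 2) - ((1 + x) * log (1 + x) + (1 - x) * log (1 - x))
  have hcont : Continuous f := by
    have := continuous_mul_log
    fun_prop
  have hderiv : ∀ x ∈ interior (Set.Icc (0 : ℝ) 1), HasDerivWithinAt f
      (2 * x / √(1 - x ^ 2) - (log (1 + x) - log (1 - x))) (interior (Set.Icc (0 : ℝ) 1)) x := by
    intro x hx
    rw [interior_Icc] at hx
    obtain ⟨hx0, hx1⟩ := hx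
    have hq : 0 < 1 - x ^ 2 := by nlinarith
    have h1 := (hasDerivAt_mul_log (x := 1 + x) (by linarith)).comp x
      ((hasDerivAt_id x).const_add 1)
    have h2 := (hasDerivAt_mul_log (x := 1 - x) (by linarith)).comp x
      ((hasDerivAt_id x).const_sub 1)
    have h3 := (((hasDerivAt_id x).pow 2).const_sub 1).sqrt hq.ne'
    have := ((h3.const_mul 2).const_sub 2).sub (h1.add h2)
    refine HasDerivAt.hasDerivWithinAt ?_
    convert this using 1
    · funext y
      simp only [f, Pi.sub_apply, Pi.add_apply, Function.comp_apply, Pi.pow_apply, id]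
    · simp only [Pi.pow_apply, id]
      field_simp
      ring
  have hmono := monotoneOn_of_hasDerivWithinAt_nonneg (convex_Icc 0 1) hcont.continuousOn hderiv
    fun x hx => by
      rw [interior_Icc] at hx
      exact sub_nonneg.2 (log_one_add_sub_log_one_sub_le hx.1.le hx.2)
  have hf0 : f 0 = 0 := by simp [f]
  have hfu := hmono ⟨le_rfl, zero_le_one⟩ ⟨hu0, hu1⟩ hu0
  rw [hf0] at hfu
  exact sub_nonneg.1 hfu

lemma mul_mul_log_mul {s : ℝ} (hs : s ≠ 0) (t : ℝ) :
    s * t * log (s * t) = s * t * log s + s * (t * log t) := by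
  rcases eq_or_ne t 0 with rfl | ht
  · simp
  · rw [log_mul hs ht]
    ring

noncomputable def twoPointEntropy (A B : ℝ) : ℝ :=
  A * log A + B * log B - (A + B) * log ((A + B) / 2)

lemma twoPointEntropy_le {A B : ℝ} (hA : 0 ≤ A) (hB : 0 ≤ B) :
    twoPointEntropy A B ≤ (√A - √B) ^ 2 := by
  rw [twoPointEntropy]
  wlog hBA : B ≤ A generalizing A B
  · convert this hB hA (le_of_not_ge hBA) using 1 <;> ring_nf
  rcases (add_nonneg hA hB).eq_or_lt with hAB | hAB
  · obtain ⟨rfl, rfl⟩ : A = 0 ∧ B = 0 := ⟨by linarith, by linarith⟩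
    simp
  set s := (A + B) / 2 with hsdef
  set u := (A - B) / (A + B) with hudef
  have hs : 0 < s := by positivity
  have hu0 : 0 ≤ u := div_nonneg (by linarith) hAB.le
  have hu1 : u ≤ 1 := (div_le_one hAB).2 (by linarith)
  have hA' : A = s * (1 + u) := by rw [hsdef, hudef]; field_simp; ring
  have hB' : B = s * (1 - u) := by rw [hsdef, hudef]; field_simp; ring
  have hlhs : A * log A + B * log B - (A + B) * log ((A + B) / 2)
      = s * ((1 + u) * log (1 + u) + (1 - u) * log (1 - u)) := by
    rw [← hsdef, hA', hB', mul_mul_log_mul hs.ne', mul_mul_log_mul hs.ne']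
    ring
  have hrhs : (√A - √B) ^ 2 = s * (2 - 2 * √(1 - u ^ 2)) := by
    rw [sub_sq, sq_sqrt hA, sq_sqrt hB, mul_assoc, ← sqrt_mul hA,
      show A * B = s ^ 2 * (1 - u ^ 2) by rw [hA', hB']; ring, sqrt_mul (sq_nonneg s),
      sqrt_sq hs.le, hA', hB']
    ring
  rw [hlhs, hrhs]
  exact mul_le_mul_of_nonneg_left (mul_log_one_add_add_mul_log_one_sub_le hu0 hu1) hs.le

lemma psiLen_of_two_mul_le {n k : ℕ} (h : 2 * k ≤ n) : psiLen n k = k :=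
  min_eq_left (Nat.cast_le.2 (by omega))

lemma psiLen_of_le_two_mul {n k : ℕ} (h : n ≤ 2 * k) : psiLen n k = (n - k : ℕ) :=
  min_eq_right (Nat.cast_le.2 (by omega))

lemma sq_norm_sub_norm_le_norm_sub_sq {E : Type*} [SeminormedAddCommGroup E] (z w : E) :
    (‖z‖ - ‖w‖) ^ 2 ≤ ‖z - w‖ ^ 2 := by
  rw [← sq_abs]
  exact pow_le_pow_left₀ (abs_nonneg _) (abs_norm_sub_norm_le z w) 2

-- Used with `z, w` the `k`-th coefficients of the even and odd parts and `ω = ζ_{2N}^k`, so that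
-- `z ± ω * w` are the coefficients at `k` and `k + N` of the whole vector (`dft_two_mul`).
lemma per_frequency_le {N k : ℕ} (hN : 2 ≤ N) (hk : k < N) (z w ω : ℂ) (hω : ‖ω‖ = 1) :
    4 * psiLen N k * (‖z‖ ^ 2 + ‖w‖ ^ 2) + 2 * (‖z‖ - ‖w‖) ^ 2
        + (if k = 0 then ‖z - ω * w‖ ^ 2 else 0)
      ≤ 2 * (k * ‖z + ω * w‖ ^ 2 + (N - k : ℕ) * ‖z - ω * w‖ ^ 2)
        + (if 2 * k = N then 2 * (‖z‖ ^ 2 + ‖w‖ ^ 2) else 0) := by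
  have hωw : ‖ω * w‖ = ‖w‖ := by rw [norm_mul, hω, one_mul]
  have hpq : ‖z + ω * w‖ ^ 2 + ‖z - ω * w‖ ^ 2 = 2 * (‖z‖ ^ 2 + ‖w‖ ^ 2) := by
    have := parallelogram_law_with_norm ℝ z (ω * w)
    rw [hωw] at this
    linarith
  have hdp : (‖z‖ - ‖w‖) ^ 2 ≤ ‖z + ω * w‖ ^ 2 := by
    simpa [hω] using sq_norm_sub_norm_le_norm_sub_sq z (-(ω * w))
  have hdq : (‖z‖ - ‖w‖) ^ 2 ≤ ‖z - ω * w‖ ^ 2 := by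
    simpa [hω] using sq_norm_sub_norm_le_norm_sub_sq z (ω * w)
  have hd := sq_nonneg (‖z‖ - ‖w‖)
  have hNk : ((N - k : ℕ) : ℝ) = N - k := Nat.cast_sub hk.le
  rcases Nat.eq_zero_or_pos k with rfl | hk0
  · have hN' : (2 : ℝ) ≤ N := by exact_mod_cast hN
    rw [psiLen_of_two_mul_le (by omega), if_pos rfl, if_neg (by omega), hNk]
    push_cast
    nlinarith
  rcases lt_trichotomy (2 * k) N with hlt | heq | hgt
  · have h1 : (1 : ℝ) ≤ N - 2 * k := by
      have : ((2 * k + 1 : ℕ) : ℝ) ≤ N := Nat.cast_le.2 hlt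
      push_cast at this
      linarith
    rw [psiLen_of_two_mul_le hlt.le, if_neg (by omega), if_neg (by omega), hNk]
    nlinarith
  · have hNk' : ((N - k : ℕ) : ℝ) = k := by rw [show N - k = k by omega]
    rw [psiLen_of_two_mul_le heq.le, if_neg (by omega), if_pos heq, hNk']
    nlinarith
  · have h1 : (1 : ℝ) ≤ 2 * k - N := by
      have : ((N + 1 : ℕ) : ℝ) ≤ 2 * k := by exact_mod_cast hgt
      push_cast at this
      linarith
    rw [psiLen_of_le_two_mul hgt.le, if_neg (by omega), if_neg (by omega), hNk]
    nlinarith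

lemma sum_ite_two_mul_eq {M : Type*} [AddCommMonoid M] {N : ℕ} (hN0 : N ≠ 0) (f : ℕ → M) :
    ∑ k ∈ range N, (if 2 * k = N then f k else 0) = if Even N then f (N / 2) else 0 := by
  split_ifs with hN
  · obtain ⟨r, rfl⟩ := hN
    rw [Finset.sum_eq_single r (fun k _ hk => if_neg (by omega))
      (fun h => absurd (mem_range.2 (by omega)) h), if_pos (by omega),
      show (r + r) / 2 = r by omega]
  · exact Finset.sum_eq_zero fun k _ => if_neg fun h => hN ⟨k, by omega⟩

lemma sum_fin_two_mul {M : Type*} [AddCommMonoid M] {N : ℕ} (f : Fin (2 * N) → M) :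
    ∑ j, f j = ∑ r : Fin N,
      (f ⟨2 * r, by have := r.isLt; omega⟩ + f ⟨2 * r + 1, by have := r.isLt; omega⟩) := by
  rw [← (finProdFinEquiv.trans (finCongr (mul_comm N 2))).sum_comp, Fintype.sum_prod_type]
  refine Finset.sum_congr rfl fun r _ => ?_
  rw [Fin.sum_univ_two]
  congr 2 <;> ext <;> simp [add_comm]

lemma mul_log_div (x : ℝ) {y : ℝ} (hy : y ≠ 0) :
    x * log (x / y) = x * log x - x * log y := by
  rcases eq_or_ne x 0 with rfl | hx
  · simp
  · rw [log_div hx hy]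
    ring

section Doubling

variable {N : ℕ}

def evenPart (l : Fin (2 * N) → ℝ) : Fin N → ℝ := fun r => l ⟨2 * r, by have := r.isLt; omega⟩

def oddPart (l : Fin (2 * N) → ℝ) : Fin N → ℝ := fun r => l ⟨2 * r + 1, by have := r.isLt; omega⟩

lemma sum_comp_eq_evenPart_add_oddPart {M : Type*} [AddCommMonoid M] (g : ℝ → M)
    (l : Fin (2 * N) → ℝ) : ∑ j, g (l j) = ∑ r, g (evenPart l r) + ∑ r, g (oddPart l r) := by
  rw [sum_fin_two_mul, sum_add_distrib]
  rfl

lemma dft_two_mul (hN : N ≠ 0) (l : Fin (2 * N) → ℝ) (k : ℕ) :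
    dft (2 * N) l k = dft N (evenPart l) k + primRoot (2 * N) ^ k * dft N (oddPart l) k := by
  rw [dft, sum_fin_two_mul, dft, dft, mul_sum, ← sum_add_distrib]
  refine Finset.sum_congr rfl fun r _ => ?_
  have hsq : primRoot (2 * N) ^ (2 * r.val * k) = primRoot N ^ (r.val * k) := by
    rw [mul_assoc, pow_mul, primRoot_two_mul_sq hN]
  simp only [evenPart, oddPart, add_mul, one_mul, pow_add, hsq]
  ring

lemma dft_two_mul_add_self (hN : N ≠ 0) (l : Fin (2 * N) → ℝ) (k : ℕ) :
    dft (2 * N) l (k + N) = dft N (evenPart l) k - primRoot (2 * N) ^ k * dft N (oddPart l) k := by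
  rw [dft_two_mul hN, dft_add_self, dft_add_self, pow_add, primRoot_two_mul_pow_self hN]
  ring

lemma entH_two_mul (hN : N ≠ 0) (l : Fin (2 * N) → ℝ) :
    ((2 * N : ℕ) : ℝ) ^ 2 * entH (2 * N) l
      = 2 * N ^ 2 * (entH N (evenPart l) + entH N (oddPart l))
        + 2 * N * twoPointEntropy (∑ r, evenPart l r ^ 2) (∑ r, oddPart l r ^ 2) := by
  have hN' : (N : ℝ) ≠ 0 := Nat.cast_ne_zero.2 hN
  simp only [entH, twoPointEntropy, sum_comp_eq_evenPart_add_oddPart (fun t => t ^ 2 * log (t ^ 2)),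
    sum_comp_eq_evenPart_add_oddPart (fun t => t ^ 2)]
  push_cast
  simp only [div_mul_eq_mul_div]
  rw [mul_log_div _ hN', mul_log_div _ hN', mul_log_div _ (by positivity),
    mul_log_div _ two_ne_zero, log_mul two_ne_zero hN']
  field_simp
  ring

lemma energy_two_mul (l : Fin (2 * N) → ℝ) :
    energy (2 * N) l = ∑ k ∈ range N,
      (k * ‖dft (2 * N) l k‖ ^ 2 + (N - k : ℕ) * ‖dft (2 * N) l (k + N)‖ ^ 2) := by
  rw [energy, show range (2 * N) = range (N + N) by rw [two_mul], sum_range_add,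
    ← sum_add_distrib]
  refine Finset.sum_congr rfl fun k hk => ?_
  have hk := mem_range.1 hk
  rw [psiLen_of_two_mul_le (by omega), psiLen_of_le_two_mul (by omega), add_comm N k,
    show 2 * N - (k + N) = N - k by omega]

lemma energy_two_mul_bound (hN : 2 ≤ N) (l : Fin (2 * N) → ℝ) :
    4 * (energy N (evenPart l) + energy N (oddPart l))
        + 2 * ∑ k ∈ range N, (‖dft N (evenPart l) k‖ - ‖dft N (oddPart l) k‖) ^ 2
        + nyquistTerm (2 * N) l
      ≤ 2 * energy (2 * N) l + 2 * (nyquistTerm N (evenPart l) + nyquistTerm N (oddPart l)) := by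
  have hN0 : N ≠ 0 := by omega
  have hsum := Finset.sum_le_sum fun k hk => per_frequency_le hN (mem_range.1 hk)
    (dft N (evenPart l) k) (dft N (oddPart l) k) _ (norm_primRoot_pow (2 * N) k)
  simp only [← dft_two_mul hN0, ← dft_two_mul_add_self hN0, sum_add_distrib, ← mul_sum,
    sum_ite_eq', mem_range, sum_ite_two_mul_eq hN0] at hsum
  rw [if_pos (Nat.pos_of_ne_zero hN0), zero_add] at hsum
  have henergy : ∑ k ∈ range N, 4 * psiLen N k * (‖dft N (evenPart l) k‖ ^ 2
      + ‖dft N (oddPart l) k‖ ^ 2) = 4 * (energy N (evenPart l) + energy N (oddPart l)) := by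
    simp only [energy, mul_sum, ← sum_add_distrib]
    exact Finset.sum_congr rfl fun k _ => by ring
  have hnyq : nyquistTerm (2 * N) l = ‖dft (2 * N) l N‖ ^ 2 := by
    rw [nyquistTerm, if_pos (even_two_mul N), Nat.mul_div_cancel_left N two_pos]
  have hnyq' : (if Even N then 2 * (‖dft N (evenPart l) (N / 2)‖ ^ 2
      + ‖dft N (oddPart l) (N / 2)‖ ^ 2) else 0)
      = 2 * (nyquistTerm N (evenPart l) + nyquistTerm N (oddPart l)) := by
    unfold nyquistTerm
    split_ifs <;> ring
  rw [energy_two_mul, sum_add_distrib]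
  linarith

end Doubling

theorem LSIWithNyquist.two_mul {N : ℕ} (hN : 2 ≤ N) (h : LSIWithNyquist N) :
    LSIWithNyquist (2 * N) := by
  intro l hl
  have hN0 : N ≠ 0 := by omega
  set A := ∑ r, evenPart l r ^ 2
  set B := ∑ r, oddPart l r ^ 2
  have hA : 0 ≤ A := sum_nonneg fun r _ => sq_nonneg _
  have hB : 0 ≤ B := sum_nonneg fun r _ => sq_nonneg _
  have hentropy := mul_le_mul_of_nonneg_left (twoPointEntropy_le hA hB)
    (Nat.cast_nonneg (α := ℝ) N)
  have hfourier := mul_sq_sqrt_sub_sqrt_le hN0 (evenPart l) (oddPart l)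
  have heven := h (evenPart l) fun r => hl _
  have hodd := h (oddPart l) fun r => hl _
  linarith [entH_two_mul hN0 l, energy_two_mul_bound hN l, nyquistTerm_nonneg N (evenPart l),
    nyquistTerm_nonneg N (oddPart l)]

theorem LSIWithNyquist.mul_two_pow {n : ℕ} (hn : 2 ≤ n) (h : LSIWithNyquist n) (m : ℕ) :
    LSIWithNyquist (n * 2 ^ m) := by
  induction m with
  | zero => simpa using h
  | succ m ih =>
    rw [pow_succ, ← mul_assoc, mul_comm]
    exact ih.two_mul (le_mul_of_le_of_one_le hn (Nat.one_le_two_pow))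

end CyclicLSI

/-- for odd `n₀ ≥ 3`, if the log-Sobolev inequality with constant 2
holds for the word-length `ψ_{n₀}`, then it holds for `ψ_{n₀·2^m}` for all `m ≥ 1`.
The inequalities are in the complex order. -/
theorem lsi_dyadic_lift_odd_base (n₀ : ℕ) (h3 : 3 ≤ n₀) (hodd : Odd n₀)
    (hLSI : ∀ l : Fin n₀ → ℝ, (∀ j, 0 ≤ l j) →
      ((entH n₀ l : ℝ) : ℂ) ≤ 2 * quadForm n₀ (PsiMat n₀) l) :
    ∀ m : ℕ, 1 ≤ m → ∀ l : Fin (n₀ * 2 ^ m) → ℝ, (∀ j, 0 ≤ l j) →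
      ((entH (n₀ * 2 ^ m) l : ℝ) : ℂ) ≤
        2 * quadForm (n₀ * 2 ^ m) (PsiMat (n₀ * 2 ^ m)) l := by
  have hbase : CyclicLSI.LSIWithNyquist n₀ := fun l hl => by
    rw [CyclicLSI.nyquistTerm_of_odd hodd, add_zero, ← CyclicLSI.ofReal_entH_le_iff (by omega)]
    exact hLSI l hl
  intro m _ l hl
  rw [CyclicLSI.ofReal_entH_le_iff (by positivity)]
  linarith [hbase.mul_two_pow (by omega) m l hl, CyclicLSI.nyquistTerm_nonneg (n₀ * 2 ^ m) l]
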